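/- Let π ∈ D_n and m ≥ 0. Define A_π(m) = Σ_{σ,τ ∈ D_n} SSYT(σ, m-2n+1) · t_{σ,τ}^π · SSYT(τ*, n), with SSYT the hook-content polynomial. Assuming (i) t_{σ,τ}^π = 0 unless σ ≤ π, (ii) t_{π,0_n}^π = 1 and t_{π,τ}^π = 0 for τ ≠ 0_n, then A_π(m), as a polynomial in m, has degree deg(π) and leading coefficient 1/H(π). -/

import Mathlib

/-! The term `(σ, τ) = (π, 0_n)` of `A_π` is the hook-content polynomial of `π`, of degree
`deg π` and leading coefficient `1/H(π)`. Every other nonzero term has `σ < π`, and a strictly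
smaller word has strictly fewer boxes: `Σ_k #{ones among the first k + 1 letters}` counts the
boxes plus the pairs `i ≤ j` of ones, and the number of such pairs depends only on the number
of ones. -/

open scoped Classical
open Polynomial

/-- Number of 1s among the first `i` letters of `σ`. -/
def psum (n : ℕ) (σ : Fin (2*n) → Bool) (i : ℕ) : ℕ :=
  (Finset.univ.filter (fun j : Fin (2*n) => (j : ℕ) < i ∧ σ j = true)).card

/-- Number of 0s among the first `i` letters of `σ`. -/
def zsum (n : ℕ) (σ : Fin (2*n) → Bool) (i : ℕ) : ℕ :=
  (Finset.univ.filter (fun j : Fin (2*n) => (j : ℕ) < i ∧ σ j = false)).card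

/-- `σ` is a Dyck word of length `2n`. -/
def IsDyckFun (n : ℕ) (σ : Fin (2*n) → Bool) : Prop :=
  (Finset.univ.filter (fun j : Fin (2*n) => σ j = false)).card = n ∧
  (Finset.univ.filter (fun j : Fin (2*n) => σ j = true)).card = n ∧
  ∀ i : ℕ, psum n σ i ≤ zsum n σ i

/-- The diagram-inclusion order on words: `σ ≤ π` iff `σ_{≤i} ≤ π_{≤i}` for all `i`. -/
def wordLE (n : ℕ) (σ π : Fin (2*n) → Bool) : Prop := ∀ i : ℕ, psum n σ i ≤ psum n π i

/-- The finite set `D_n` of Dyck words of length `2n`. -/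
noncomputable def DnF (n : ℕ) : Finset (Fin (2*n) → Bool) :=
  Finset.univ.filter (IsDyckFun n)

/-- The boxes of the Ferrers diagram of the word `σ`, encoded as its inversion
pairs: pairs `(i, j)` with `i < j`, `σ_i = 1`, `σ_j = 0`.  In particular
`deg σ = (boxesW n σ).card`. -/
def boxesW (n : ℕ) (σ : Fin (2*n) → Bool) : Finset (Fin (2*n) × Fin (2*n)) :=
  Finset.univ.filter (fun p => p.1 < p.2 ∧ σ p.1 = true ∧ σ p.2 = false)

/-- The hook length of the box corresponding to the inversion pair `(i, j)` of
a word is `j - i`. -/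
def hookW {n : ℕ} (p : Fin (2*n) × Fin (2*n)) : ℕ := (p.2 : ℕ) - (p.1 : ℕ)

/-- The content of the box of `σ` corresponding to the inversion pair `(i, j)`:
`(# of 1s at positions ≤ i) + (# of 0s at positions ≤ j) - n - 1`. -/
def contW (n : ℕ) (σ : Fin (2*n) → Bool) (p : Fin (2*n) × Fin (2*n)) : ℚ :=
  ((Finset.univ.filter (fun j : Fin (2*n) => j ≤ p.1 ∧ σ j = true)).card : ℚ) +
  ((Finset.univ.filter (fun j : Fin (2*n) => j ≤ p.2 ∧ σ j = false)).card : ℚ) - n - 1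

/-- The conjugate word, `(σ*)_i = 1 - σ_{2n+1-i}`. -/
def conjF (n : ℕ) (σ : Fin (2*n) → Bool) : Fin (2*n) → Bool := fun i => ! σ i.rev

/-- The value `SSYT(σ, N) = ∏_{u ∈ σ} (N + c(u))/h(u)` of the hook content
polynomial of (the diagram of) the word `σ` at `N`. -/
def ssytVal (n : ℕ) (σ : Fin (2*n) → Bool) (N : ℚ) : ℚ :=
  ∏ p ∈ boxesW n σ, (N + contW n σ p) / (hookW p : ℚ)

/-- The word `0_n = 0^n 1^n` (the empty diagram). -/
def zeroF (n : ℕ) : Fin (2*n) → Bool := fun j => decide (n ≤ (j : ℕ))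

/-- The polynomial (in `m`) `A_π(m) = Σ_{σ,τ ∈ D_n} SSYT(σ, m-2n+1) ⬝ t_{σ,τ}^π
⬝ SSYT(τ*, n)`, where `SSYT(σ, m-2n+1)` is the hook content polynomial. -/
noncomputable def Apoly (n : ℕ)
    (t : (Fin (2*n) → Bool) → (Fin (2*n) → Bool) → ℕ) : Polynomial ℚ :=
  ∑ σ ∈ DnF n, ∑ τ ∈ DnF n,
    C ((t σ τ : ℚ)) *
      ((∏ p ∈ boxesW n σ,
          (C (1 / (hookW p : ℚ)) * (X + C (contW n σ p - 2 * (n : ℚ) + 1)))) *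
        C (ssytVal n (conjF n τ) (n : ℚ)))

open Finset

section LinearOrder

variable {α : Type*} [LinearOrder α]

theorem two_mul_card_filter_fst_le_snd (s : Finset α) :
    2 * #{p ∈ s ×ˢ s | p.1 ≤ p.2} = #s * #s + #s := by
  have hswap : #{p ∈ s ×ˢ s | p.2 ≤ p.1} = #{p ∈ s ×ˢ s | p.1 ≤ p.2} :=
    card_bij' (fun p _ => p.swap) (fun p _ => p.swap) (by simp; tauto) (by simp; tauto)
      (by simp) (by simp)
  have hunion : {p ∈ s ×ˢ s | p.1 ≤ p.2} ∪ {p ∈ s ×ˢ s | p.2 ≤ p.1} = s ×ˢ s := by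
    rw [← filter_or, filter_true_of_mem fun p _ => le_total p.1 p.2]
  have hinter : {p ∈ s ×ˢ s | p.1 ≤ p.2} ∩ {p ∈ s ×ˢ s | p.2 ≤ p.1} = s.diag := by
    rw [← filter_and]
    ext ⟨a, b⟩
    simp only [mem_filter, mem_product, mem_diag]
    constructor
    · rintro ⟨⟨ha, -⟩, hab, hba⟩
      exact ⟨ha, le_antisymm hab hba⟩
    · rintro ⟨ha, rfl⟩
      exact ⟨⟨ha, ha⟩, le_rfl, le_rfl⟩
  have := card_union_add_card_inter {p ∈ s ×ˢ s | p.1 ≤ p.2} {p ∈ s ×ˢ s | p.2 ≤ p.1}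
  rw [hunion, hinter, card_product, diag_card, hswap] at this
  omega

end LinearOrder

namespace Polynomial

variable {R ι : Type*} [Semiring R] {s : Finset ι} {f : ι → R[X]} {i : ι}

theorem degree_sum_erase_lt (hfi : f i ≠ 0)
    (hf : ∀ j ∈ s, j ≠ i → degree (f j) < degree (f i)) :
    degree (∑ j ∈ s.erase i, f j) < degree (f i) :=
  (degree_sum_le _ _).trans_lt <| (Finset.sup_lt_iff (bot_lt_iff_ne_bot.2 (by simpa))).2
    fun j hj => hf j (mem_of_mem_erase hj) (ne_of_mem_erase hj)

theorem natDegree_sum_of_degree_lt (hi : i ∈ s) (hfi : f i ≠ 0)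
    (hf : ∀ j ∈ s, j ≠ i → degree (f j) < degree (f i)) :
    natDegree (∑ j ∈ s, f j) = natDegree (f i) := by
  rw [← add_sum_erase s f hi, natDegree_add_eq_left_of_degree_lt (degree_sum_erase_lt hfi hf)]

theorem leadingCoeff_sum_of_degree_lt (hi : i ∈ s) (hfi : f i ≠ 0)
    (hf : ∀ j ∈ s, j ≠ i → degree (f j) < degree (f i)) :
    leadingCoeff (∑ j ∈ s, f j) = leadingCoeff (f i) := by
  rw [← add_sum_erase s f hi, leadingCoeff_add_of_degree_lt' (degree_sum_erase_lt hfi hf)]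

end Polynomial

section Words

variable {n : ℕ}

theorem psum_zero (σ : Fin (2*n) → Bool) : psum n σ 0 = 0 := by
  simp [psum]

theorem psum_succ (σ : Fin (2*n) → Bool) (j : Fin (2*n)) :
    psum n σ (j + 1) = psum n σ j + if σ j = true then 1 else 0 := by
  simp only [psum, card_filter]
  rw [← Fintype.sum_ite_eq' j fun k => if σ k = true then 1 else 0, ← sum_add_distrib]
  refine sum_congr rfl fun k _ => ?_
  obtain rfl | hkj := eq_or_ne k j
  · simp
  · have hlt : (k : ℕ) < j + 1 ↔ (k : ℕ) < j := by have := Fin.val_ne_of_ne hkj; omega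
    simp [hlt, hkj]

theorem eq_of_forall_psum_succ_eq {σ π : Fin (2*n) → Bool}
    (h : ∀ j : Fin (2*n), psum n σ (j + 1) = psum n π (j + 1)) : σ = π := by
  funext j
  have hj : psum n σ j = psum n π j := by
    obtain ⟨_ | m, hm⟩ := j
    · simp [psum_zero]
    · exact h ⟨m, by omega⟩
  have := h j
  rw [psum_succ, psum_succ, hj] at this
  cases hσ : σ j <;> cases hπ : π j <;> simp_all

theorem sum_psum_succ (σ : Fin (2*n) → Bool) :
    ∑ k : Fin (2*n), psum n σ (k + 1) =
      #(boxesW n σ) +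
        #{p ∈ univ.filter (σ · = true) ×ˢ univ.filter (σ · = true) | p.1 ≤ p.2} := by
  have hpairs : ∑ k : Fin (2*n), psum n σ (k + 1) =
      #{p : Fin (2*n) × Fin (2*n) | p.1 ≤ p.2 ∧ σ p.1 = true} := by
    simp only [psum, card_filter, Nat.lt_succ_iff, ← Fin.le_def]
    rw [Fintype.sum_prod_type_right]
  rw [hpairs, ← card_filter_add_card_filter_not (p := fun p => σ p.2 = false), filter_filter,
    filter_filter]
  congr 2
  · ext p
    simp only [boxesW, mem_filter, mem_univ, true_and]
    constructor
    · rintro ⟨⟨hle, h1⟩, h2⟩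
      exact ⟨lt_of_le_of_ne hle fun he => by simp_all, h1, h2⟩
    · rintro ⟨hlt, h1, h2⟩
      exact ⟨⟨hlt.le, h1⟩, h2⟩
  · ext p
    simp only [mem_filter, mem_product, mem_univ, true_and, Bool.not_eq_false]
    tauto

theorem card_boxesW_lt {σ π : Fin (2*n) → Bool}
    (hcard : #{j | σ j = true} = #{j | π j = true}) (hle : wordLE n σ π) (hne : σ ≠ π) :
    #(boxesW n σ) < #(boxesW n π) := by
  have hsum : ∑ k : Fin (2*n), psum n σ (k + 1) < ∑ k : Fin (2*n), psum n π (k + 1) := by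
    refine sum_lt_sum (fun k _ => hle _) ?_
    by_contra! hge
    exact hne (eq_of_forall_psum_succ_eq fun k => (hle _).antisymm (hge k (mem_univ k)))
  have hσ := two_mul_card_filter_fst_le_snd ({j | σ j = true} : Finset (Fin (2*n)))
  have hπ := two_mul_card_filter_fst_le_snd ({j | π j = true} : Finset (Fin (2*n)))
  rw [sum_psum_succ, sum_psum_succ] at hsum
  rw [hcard] at hσ
  omega

theorem conjF_zeroF : conjF n (zeroF n) = zeroF n := by
  funext i
  simp only [conjF, zeroF, Fin.val_rev]
  have := i.isLt
  by_cases h : n ≤ (i : ℕ) <;> simp [h] <;> omega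

theorem boxesW_zeroF : boxesW n (zeroF n) = ∅ := by
  ext ⟨i, j⟩
  simp only [boxesW, zeroF, mem_filter, mem_univ, true_and, decide_eq_true_eq,
    decide_eq_false_iff_not, Fin.lt_def, notMem_empty, iff_false]
  omega

theorem isDyckFun_zeroF : IsDyckFun n (zeroF n) := by
  have hzeros : #{j : Fin (2*n) | zeroF n j = false} = n := by
    simp only [zeroF, decide_eq_false_iff_not, not_le, Fin.card_filter_val_lt]
    omega
  have hones : #{j : Fin (2*n) | zeroF n j = true} = n := by
    have := card_filter_add_card_filter_not (s := univ) (fun j : Fin (2*n) => zeroF n j = false)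
    simp only [Bool.not_eq_false, card_univ, Fintype.card_fin, hzeros] at this
    omega
  refine ⟨hzeros, hones, fun i => ?_⟩
  rcases le_total i n with hi | hi
  · have : psum n (zeroF n) i = 0 := by
      simp only [psum, zeroF, decide_eq_true_eq, card_eq_zero, filter_eq_empty_iff]
      omega
    omega
  · calc psum n (zeroF n) i ≤ #{j : Fin (2*n) | zeroF n j = true} :=
          card_le_card fun j => by simp only [mem_filter]; tauto
      _ = #{j : Fin (2*n) | zeroF n j = false} := by rw [hones, hzeros]
      _ = zsum n (zeroF n) i := congrArg card <| filter_congr fun j _ => by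
          simp only [zeroF, decide_eq_false_iff_not, not_le]
          omega

end Words

/-- `SSYT(σ, m - 2n + 1)` as a polynomial in `m`. -/
noncomputable def ssytPoly (n : ℕ) (σ : Fin (2*n) → Bool) : ℚ[X] :=
  ∏ p ∈ boxesW n σ, C (1 / (hookW p : ℚ)) * (X + C (contW n σ p - 2 * (n : ℚ) + 1))

section HookContent

variable {n : ℕ} {σ : Fin (2*n) → Bool}

theorem hookW_ne_zero {p : Fin (2*n) × Fin (2*n)} (hp : p ∈ boxesW n σ) :
    (hookW p : ℚ) ≠ 0 := by
  simp only [boxesW, mem_filter, mem_univ, true_and, Fin.lt_def] at hp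
  simp only [hookW, ne_eq, Nat.cast_eq_zero]
  omega

theorem leadingCoeff_ssytPoly :
    (ssytPoly n σ).leadingCoeff = 1 / ∏ p ∈ boxesW n σ, (hookW p : ℚ) := by
  simp only [ssytPoly, leadingCoeff_prod, leadingCoeff_mul, leadingCoeff_C, leadingCoeff_X_add_C,
    mul_one, one_div, prod_inv_distrib]

theorem ssytPoly_ne_zero : ssytPoly n σ ≠ 0 := by
  rw [← leadingCoeff_ne_zero, leadingCoeff_ssytPoly]
  exact one_div_ne_zero (prod_ne_zero_iff.2 fun _ => hookW_ne_zero)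

theorem natDegree_ssytPoly : (ssytPoly n σ).natDegree = #(boxesW n σ) := by
  rw [ssytPoly, natDegree_prod _ _ fun p hp => ?_]
  · rw [sum_congr rfl fun p hp => by
      rw [natDegree_C_mul (one_div_ne_zero (hookW_ne_zero hp)), natDegree_X_add_C]]
    simp
  · exact mul_ne_zero (by simpa using hookW_ne_zero hp) (X_add_C_ne_zero _)

end HookContent

theorem Apoly_eq_sum (n : ℕ) (t : (Fin (2*n) → Bool) → (Fin (2*n) → Bool) → ℕ) :
    Apoly n t = ∑ q ∈ DnF n ×ˢ DnF n,
      C ((t q.1 q.2 : ℚ) * ssytVal n (conjF n q.2) n) * ssytPoly n q.1 := by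
  rw [Apoly, sum_product]
  refine sum_congr rfl fun σ _ => sum_congr rfl fun τ _ => ?_
  rw [C_mul, ssytPoly]
  ring

theorem degree_C_mul_ssytPoly_lt {n : ℕ} {σ π : Fin (2*n) → Bool} (hσ : IsDyckFun n σ)
    (hπ : IsDyckFun n π) (hle : wordLE n σ π) (hne : σ ≠ π) (c : ℚ) :
    degree (C c * ssytPoly n σ) < #(boxesW n π) :=
  calc degree (C c * ssytPoly n σ) ≤ degree (ssytPoly n σ) := by
        rw [← smul_eq_C_mul]; exact degree_smul_le _ _
    _ = #(boxesW n σ) := by rw [degree_eq_natDegree ssytPoly_ne_zero, natDegree_ssytPoly]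
    _ < #(boxesW n π) := by exact_mod_cast card_boxesW_lt (hσ.2.1.trans hπ.2.1.symm) hle hne

/-- Let `π ∈ D_n` and let `t` be the TFPL numbers `t_{σ,τ}^π`.  Assuming
(i) `t_{σ,τ}^π = 0` unless `σ ≤ π`, and (ii) `t_{π,0_n}^π = 1` and
`t_{π,τ}^π = 0` for `τ ≠ 0_n`, the polynomial
`A_π(m) = Σ_{σ,τ ∈ D_n} SSYT(σ, m-2n+1) t_{σ,τ}^π SSYT(τ*, n)` has degree
`deg(π)` and leading coefficient `1/H(π)` (the product of hook lengths). -/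
theorem Apoly_degree_leadingCoeff (n : ℕ) (π : Fin (2*n) → Bool)
    (hπ : IsDyckFun n π)
    (t : (Fin (2*n) → Bool) → (Fin (2*n) → Bool) → ℕ)
    (h1 : ∀ σ τ, IsDyckFun n σ → IsDyckFun n τ → ¬ wordLE n σ π → t σ τ = 0)
    (h2 : t π (zeroF n) = 1)
    (h3 : ∀ τ, IsDyckFun n τ → τ ≠ zeroF n → t π τ = 0) :
    (Apoly n t).natDegree = (boxesW n π).card ∧
    (Apoly n t).leadingCoeff = 1 / ∏ p ∈ boxesW n π, (hookW p : ℚ) := by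
  rw [Apoly_eq_sum]
  set f : (Fin (2*n) → Bool) × (Fin (2*n) → Bool) → ℚ[X] :=
    fun q => C ((t q.1 q.2 : ℚ) * ssytVal n (conjF n q.2) n) * ssytPoly n q.1
  have hmem : (π, zeroF n) ∈ DnF n ×ˢ DnF n := by simp [DnF, hπ, isDyckFun_zeroF]
  have hlead : f (π, zeroF n) = ssytPoly n π := by
    simp [f, h2, conjF_zeroF, ssytVal, boxesW_zeroF]
  have hlt : ∀ q ∈ DnF n ×ˢ DnF n, q ≠ (π, zeroF n) →
      degree (f q) < degree (f (π, zeroF n)) := by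
    rintro ⟨σ, τ⟩ hq hne
    simp only [DnF, mem_product, mem_filter, mem_univ, true_and] at hq
    rw [hlead, degree_eq_natDegree ssytPoly_ne_zero, natDegree_ssytPoly]
    by_cases ht : t σ τ = 0
    · simp [f, ht]
    have hle : wordLE n σ π := by_contra fun h => ht (h1 σ τ hq.1 hq.2 h)
    have hσπ : σ ≠ π := by
      rintro rfl
      exact ht (h3 τ hq.2 fun h => hne (by rw [h]))
    exact degree_C_mul_ssytPoly_lt hq.1 hπ hle hσπ _
  have hne0 : f (π, zeroF n) ≠ 0 := hlead ▸ ssytPoly_ne_zero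
  rw [natDegree_sum_of_degree_lt hmem hne0 hlt, leadingCoeff_sum_of_degree_lt hmem hne0 hlt, hlead]
  exact ⟨natDegree_ssytPoly, leadingCoeff_ssytPoly⟩
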